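/- (Differential of the development map.) Let a ∈ u(n) be a fixed diagonal matrix and let g : ℝ² → U(n), (x,s) ↦ g(x,s), be a smooth map such that u := g⁻¹g_x takes values in u(n)_a^⊥, and such that for each s the maps x ↦ u(x,s) and x ↦ (g⁻¹g_s)(x,s) are of Schwartz class and (g⁻¹g_s)(x,s) → 0 as x → −∞. Then for each s, ∂_s u(·,s) = P_{u(·,s)}(π_a^⊥(g⁻¹g_s)(·,s)). -/

import Mathlib

open Matrix Filter MeasureTheory
open scoped Classical

attribute [local instance] Matrix.normedAddCommGroup Matrix.normedSpace

/-- A map of `ℝ` into a normed space is of Schwartz class if it is (the underlying function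
of) a Schwartz map. -/
def IsSchwartz {E : Type*} [NormedAddCommGroup E] [NormedSpace ℝ E] (f : ℝ → E) : Prop :=
  ∃ φ : SchwartzMap ℝ E, ⇑φ = f

variable {ι : Type*} [Fintype ι] [DecidableEq ι]

/-- The centralizer `u(n)_a = {y ∈ u(n) : [y,a] = 0}` of `a` in `u(n)`. -/
def uCent (a : Matrix ι ι ℂ) : Set (Matrix ι ι ℂ) :=
  {y | yᴴ = -y ∧ y * a = a * y}

/-- The orthogonal complement `u(n)_a^⊥` of `u(n)_a` in `u(n)` w.r.t. `⟨x,y⟩ = −tr(xy)`. -/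
def uPerp (a : Matrix ι ι ℂ) : Set (Matrix ι ι ℂ) :=
  {y | yᴴ = -y ∧ ∀ z ∈ uCent a, -(y * z).trace = 0}

/-- The orthogonal projection `π_a` of `u(n)` onto `u(n)_a` (for `a` diagonal): it keeps
exactly the entries `(i,j)` with `a i i = a j j`. -/
noncomputable def centProj (a y : Matrix ι ι ℂ) : Matrix ι ι ℂ :=
  Matrix.of fun i j => if a i i = a j j then y i j else 0

/-- The orthogonal projection `π_a^⊥` of `u(n)` onto `u(n)_a^⊥` (for `a` diagonal): it keeps
exactly the entries `(i,j)` with `a i i ≠ a j j`. -/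
noncomputable def perpProj (a y : Matrix ι ι ℂ) : Matrix ι ι ℂ :=
  Matrix.of fun i j => if a i i = a j j then 0 else y i j

/-- The integral operator `T_u(v)(x) = ∫_{−∞}^x π_a([u(y), v(y)]) dy`. -/
noncomputable def Tu (a : Matrix ι ι ℂ) (u v : ℝ → Matrix ι ι ℂ) (x : ℝ) : Matrix ι ι ℂ :=
  ∫ y in Set.Iic x, centProj a (u y * v y - v y * u y)

/-- The Poisson operator `P_u(v) = v_x + π_a^⊥([u,v]) − [u, T_u(v)]`. -/
noncomputable def Pu (a : Matrix ι ι ℂ) (u v : ℝ → Matrix ι ι ℂ) (x : ℝ) : Matrix ι ι ℂ :=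
  deriv v x + perpProj a (u x * v x - v x * u x)
    - (u x * Tu a u v x - Tu a u v x * u x)


/-!
Put `V = g⁻¹g_s`. Unitarity gives `(g_s)* = -g⁻¹g_s g⁻¹` and similarly for `g_x`; together with
the symmetry of mixed partials this yields the zero-curvature equation `u_s = V_x + [u, V]`.
As `u`, hence `u_s`, takes values in `u(n)_a^⊥`, and `π_a` is a bimodule map over `u(n)_a`
(so `π_a[u, π_a V] = 0`), projecting the equation gives `π_a[u, π_a^⊥ V] = -(π_a V)_x`. Since
`V → 0` at `-∞`, integration gives `T_u(π_a^⊥ V) = -π_a V`, and substituting this into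
`P_u(π_a^⊥ V)` leaves `π_a^⊥(V_x + [u, V]) = π_a^⊥ u_s = u_s`.
-/

open Function

section PartialDerivatives

variable {E : Type*} [NormedAddCommGroup E] [NormedSpace ℝ E]

noncomputable def partialFst (g : ℝ → ℝ → E) (x s : ℝ) : E := deriv (fun y => g y s) x

noncomputable def partialSnd (g : ℝ → ℝ → E) (x s : ℝ) : E := deriv (g x) s

variable {G : ℝ × ℝ → E} {g : ℝ → ℝ → E} {x s : ℝ}

theorem HasFDerivAt.hasDerivAt_fst {G' : ℝ × ℝ →L[ℝ] E} (hG : HasFDerivAt G G' (x, s)) :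
    HasDerivAt (fun y => G (y, s)) (G' (1, 0)) x :=
  hG.comp_hasDerivAt x ((hasDerivAt_id x).prodMk (hasDerivAt_const x s))

theorem HasFDerivAt.hasDerivAt_snd {G' : ℝ × ℝ →L[ℝ] E} (hG : HasFDerivAt G G' (x, s)) :
    HasDerivAt (fun σ => G (x, σ)) (G' (0, 1)) s :=
  hG.comp_hasDerivAt s ((hasDerivAt_const s x).prodMk (hasDerivAt_id s))

theorem partialFst_eq_fderiv (hg : DifferentiableAt ℝ (uncurry g) (x, s)) :
    partialFst g x s = fderiv ℝ (uncurry g) (x, s) (1, 0) :=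
  hg.hasFDerivAt.hasDerivAt_fst.deriv

theorem partialSnd_eq_fderiv (hg : DifferentiableAt ℝ (uncurry g) (x, s)) :
    partialSnd g x s = fderiv ℝ (uncurry g) (x, s) (0, 1) :=
  hg.hasFDerivAt.hasDerivAt_snd.deriv

theorem hasDerivAt_partialFst (hg : DifferentiableAt ℝ (uncurry g) (x, s)) :
    HasDerivAt (fun y => g y s) (partialFst g x s) x :=
  hg.hasFDerivAt.hasDerivAt_fst.differentiableAt.hasDerivAt

theorem hasDerivAt_partialSnd (hg : DifferentiableAt ℝ (uncurry g) (x, s)) :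
    HasDerivAt (g x) (partialSnd g x s) s :=
  hg.hasFDerivAt.hasDerivAt_snd.differentiableAt.hasDerivAt

theorem hasFDerivAt_fderiv (hg : ContDiff ℝ 2 (uncurry g)) (x s : ℝ) :
    HasFDerivAt (fderiv ℝ (uncurry g)) (fderiv ℝ (fderiv ℝ (uncurry g)) (x, s)) (x, s) :=
  ((hg.fderiv_right (m := 1) le_rfl).differentiable one_ne_zero _).hasFDerivAt

theorem hasDerivAt_partialFst_snd (hg : ContDiff ℝ 2 (uncurry g)) (x s : ℝ) :
    HasDerivAt (partialFst g x) (fderiv ℝ (fderiv ℝ (uncurry g)) (x, s) (0, 1) (1, 0)) s := by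
  have hd := hg.differentiable two_ne_zero
  rw [show partialFst g x = fun σ => fderiv ℝ (uncurry g) (x, σ) (1, 0) from
    funext fun σ => partialFst_eq_fderiv (hd _)]
  simpa only [map_zero, add_zero] using
    (hasFDerivAt_fderiv hg x s).hasDerivAt_snd.clm_apply (hasDerivAt_const s ((1, 0) : ℝ × ℝ))

theorem hasDerivAt_partialSnd_fst (hg : ContDiff ℝ 2 (uncurry g)) (x s : ℝ) :
    HasDerivAt (fun y => partialSnd g y s)
      (fderiv ℝ (fderiv ℝ (uncurry g)) (x, s) (0, 1) (1, 0)) x := by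
  have hd := hg.differentiable two_ne_zero
  rw [hg.contDiffAt.isSymmSndFDerivAt (by simp)]
  simpa only [partialSnd_eq_fderiv (hd _), map_zero, add_zero] using
    (hasFDerivAt_fderiv hg x s).hasDerivAt_fst.clm_apply (hasDerivAt_const x ((0, 1) : ℝ × ℝ))

end PartialDerivatives

section MatrixCalculus

variable {m : Type*} [Fintype m] {f h : ℝ → Matrix m m ℂ} {f' h' : Matrix m m ℂ} {t : ℝ}

-- The entrywise sup norm on matrices is not submultiplicative, so `HasDerivAt.mul` is unavailable.
theorem HasDerivAt.matrix_mul (hf : HasDerivAt f f' t) (hh : HasDerivAt h h' t) :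
    HasDerivAt (fun t => f t * h t) (f t * h' + f' * h t) t :=
  (LinearMap.mul ℝ (Matrix m m ℂ)).toContinuousBilinearMap.hasDerivAt_of_bilinear
    (fun _ => hf) (fun _ => hh)

theorem star_deriv_mul_eq_neg_of_mem_unitary [DecidableEq m]
    (hU : ∀ t, f t ∈ unitaryGroup m ℂ) (hf : HasDerivAt f f' t) :
    star f' * f t = -(star (f t) * f') := by
  have hprod := hf.star.matrix_mul hf
  simp only [fun t => Unitary.star_mul_self_of_mem (hU t)] at hprod
  exact eq_neg_of_add_eq_zero_right ((hasDerivAt_const t (1 : Matrix m m ℂ)).unique hprod).symm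

end MatrixCalculus

section Projections

variable {m : Type*} (a : Matrix m m ℂ)

theorem perpProj_eq_sub (y : Matrix m m ℂ) : perpProj a y = y - centProj a y := by
  ext i j
  by_cases h : a i i = a j j <;> simp [perpProj, centProj, h]

noncomputable def centProjLinearMap : Matrix m m ℂ →ₗ[ℝ] Matrix m m ℂ where
  toFun := centProj a
  map_add' x y := by
    ext i j
    by_cases h : a i i = a j j <;> simp [centProj, h]
  map_smul' r x := by
    ext i j
    by_cases h : a i i = a j j <;> simp [centProj, h]

theorem centProj_sub (x y : Matrix m m ℂ) :
    centProj a (x - y) = centProj a x - centProj a y :=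
  map_sub (centProjLinearMap a) x y

theorem centProj_neg (y : Matrix m m ℂ) : centProj a (-y) = -centProj a y :=
  map_neg (centProjLinearMap a) y

theorem conjTranspose_centProj (y : Matrix m m ℂ) : (centProj a y)ᴴ = centProj a yᴴ := by
  ext i j
  by_cases h : a i i = a j j <;> simp [centProj, h, eq_comm (a := a j j)]

variable [Fintype m]

theorem trace_centProj (y : Matrix m m ℂ) : (centProj a y).trace = y.trace := by
  simp [trace, centProj]

theorem centProj_centProj_mul (x y : Matrix m m ℂ) :
    centProj a (centProj a x * y) = centProj a x * centProj a y := by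
  ext i j
  simp only [centProj, of_apply, mul_apply]
  split_ifs with hij
  · refine Finset.sum_congr rfl fun k _ => ?_
    by_cases hik : a i i = a k k
    · simp [hik, hik ▸ hij]
    · simp [hik]
  · refine (Finset.sum_eq_zero fun k _ => ?_).symm
    by_cases hik : a i i = a k k
    · simp [hik ▸ hij]
    · simp [hik]

theorem centProj_mul_centProj (x y : Matrix m m ℂ) :
    centProj a (x * centProj a y) = centProj a x * centProj a y := by
  ext i j
  simp only [centProj, of_apply, mul_apply]
  split_ifs with hij
  · refine Finset.sum_congr rfl fun k _ => ?_
    by_cases hkj : a k k = a j j <;> simp [hkj, hij]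
  · refine (Finset.sum_eq_zero fun k _ => ?_).symm
    by_cases hkj : a k k = a j j
    · simp [hkj ▸ hij]
    · simp [hkj]

theorem centProj_commutator_centProj {u : Matrix m m ℂ} (hu : centProj a u = 0)
    (v : Matrix m m ℂ) : centProj a (u * centProj a v - centProj a v * u) = 0 := by
  rw [centProj_sub, centProj_mul_centProj, centProj_centProj_mul, hu, zero_mul, mul_zero, sub_zero]

theorem centProj_mem_uCent [DecidableEq m] {a : Matrix m m ℂ} (ha : a.IsDiag)
    {y : Matrix m m ℂ} (hy : yᴴ = -y) : centProj a y ∈ uCent a := by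
  refine ⟨by rw [conjTranspose_centProj, hy, centProj_neg], ?_⟩
  obtain ⟨d, rfl⟩ : ∃ d, a = diagonal d := ⟨a.diag, ha.diagonal_diag.symm⟩
  ext i j
  by_cases h : d i = d j <;> simp [centProj, h, mul_comm]

-- Test orthogonality against `z = π_a y` itself: `⟨y, π_a y⟩ = ‖π_a y‖²`.
open scoped ComplexOrder in
theorem centProj_eq_zero_of_mem_uPerp [DecidableEq m] {a : Matrix m m ℂ} (ha : a.IsDiag)
    {y : Matrix m m ℂ} (hy : y ∈ uPerp a) : centProj a y = 0 := by
  rw [← trace_mul_conjTranspose_self_eq_zero_iff]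
  calc (centProj a y * (centProj a y)ᴴ).trace = (centProj a y * yᴴ).trace := by
        rw [conjTranspose_centProj, ← centProj_centProj_mul, trace_centProj]
    _ = -(y * centProj a y).trace := by rw [hy.1, trace_mul_comm, neg_mul, trace_neg]
    _ = 0 := hy.2 _ (centProj_mem_uCent ha hy.1)

end Projections

section Schwartz

variable {E : Type*} [NormedAddCommGroup E] [NormedSpace ℝ E] {f : ℝ → E}

theorem IsSchwartz.differentiable (hf : IsSchwartz f) : Differentiable ℝ f := by
  obtain ⟨φ, rfl⟩ := hf
  exact φ.differentiable

theorem IsSchwartz.integrable_deriv (hf : IsSchwartz f) : Integrable (deriv f) := by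
  obtain ⟨φ, rfl⟩ := hf
  rw [← funext (SchwartzMap.derivCLM_apply ℝ φ)]
  exact (SchwartzMap.derivCLM ℝ E φ).integrable

end Schwartz

section ProjectionCalculus

variable {m : Type*} [Fintype m] (a : Matrix m m ℂ) {f : ℝ → Matrix m m ℂ} {f' : Matrix m m ℂ}
  {t : ℝ}

theorem HasDerivAt.centProj (hf : HasDerivAt f f' t) :
    HasDerivAt (fun t => centProj a (f t)) (centProj a f') t :=
  (centProjLinearMap a).toContinuousLinearMap.hasFDerivAt.comp_hasDerivAt t hf

theorem HasDerivAt.perpProj (hf : HasDerivAt f f' t) :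
    HasDerivAt (fun t => perpProj a (f t)) (perpProj a f') t := by
  rw [funext fun t => perpProj_eq_sub a (f t), perpProj_eq_sub]
  exact hf.sub (hf.centProj a)

theorem centProj_eq_zero_of_hasDerivAt (hf : HasDerivAt f f' t)
    (h : ∀ t, centProj a (f t) = 0) : centProj a f' = 0 := by
  have hcent := hf.centProj a
  simp only [h] at hcent
  exact hcent.unique (hasDerivAt_const t 0)

theorem integral_Iic_centProj_deriv (hf : IsSchwartz f) (hlim : Tendsto f atBot (nhds 0))
    (x : ℝ) : ∫ y in Set.Iic x, centProj a (deriv f y) = centProj a (f x) := by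
  let π := (centProjLinearMap a).toContinuousLinearMap
  have hπlim : Tendsto (fun y => centProj a (f y)) atBot (nhds 0) := by
    have hcomp := (π.continuous.tendsto 0).comp hlim
    rwa [map_zero] at hcomp
  exact (integral_Iic_of_hasDerivAt_of_tendsto'
    (fun y _ => (hf.differentiable y).hasDerivAt.centProj a)
    (π.integrable_comp hf.integrable_deriv).integrableOn hπlim).trans (sub_zero _)

end ProjectionCalculus

theorem hasDerivAt_star_mul_partialFst {m : Type*} [Fintype m] [DecidableEq m]
    {g : ℝ → ℝ → Matrix m m ℂ} (hg : ContDiff ℝ 2 (uncurry g))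
    (hU : ∀ x s, g x s ∈ unitaryGroup m ℂ) {u v : ℝ → ℝ → Matrix m m ℂ}
    (hu : ∀ x s, u x s = star (g x s) * partialFst g x s)
    (hv : ∀ x s, v x s = star (g x s) * partialSnd g x s) (x s : ℝ) :
    HasDerivAt (u x) (partialFst v x s + (u x s * v x s - v x s * u x s)) s := by
  have hd := hg.differentiable two_ne_zero
  have hgx := hasDerivAt_partialFst (hd (x, s))
  have hgs := hasDerivAt_partialSnd (hd (x, s))
  have hus : HasDerivAt (u x)
      (star (g x s) * fderiv ℝ (fderiv ℝ (uncurry g)) (x, s) (0, 1) (1, 0)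
        + star (partialSnd g x s) * partialFst g x s) s := by
    rw [show u x = fun σ => star (g x σ) * partialFst g x σ from funext (hu x)]
    exact hgs.star.matrix_mul (hasDerivAt_partialFst_snd hg x s)
  have hvx : HasDerivAt (fun y => v y s)
      (star (g x s) * fderiv ℝ (fderiv ℝ (uncurry g)) (x, s) (0, 1) (1, 0)
        + star (partialFst g x s) * partialSnd g x s) x := by
    rw [show (fun y => v y s) = fun y => star (g y s) * partialSnd g y s from funext (hv · s)]
    exact hgx.star.matrix_mul (hasDerivAt_partialSnd_fst hg x s)
  have hpull : ∀ D E, star D * g x s = -(star (g x s) * D) →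
      star D * E = -(star (g x s) * D * (star (g x s) * E)) := fun D E hD => by
    rw [← neg_mul, ← hD, mul_assoc, ← mul_assoc (g x s), Unitary.mul_star_self_of_mem (hU x s),
      one_mul]
  convert hus using 1
  rw [partialFst, hvx.deriv, hu, hv,
    hpull _ _ (star_deriv_mul_eq_neg_of_mem_unitary (hU x) hgs),
    hpull _ _ (star_deriv_mul_eq_neg_of_mem_unitary (f := (g · s)) (hU · s) hgx)]
  abel

section Flatness

variable {m : Type*} [Fintype m] (a : Matrix m m ℂ) {U U' V V' : Matrix m m ℂ}

theorem centProj_commutator_perpProj_of_flat (hU : centProj a U = 0)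
    (hU' : centProj a U' = 0) (hflat : U' = V' + (U * V - V * U)) :
    centProj a (U * perpProj a V - perpProj a V * U) = -centProj a V' := by
  have hsplit : U * perpProj a V - perpProj a V * U
      = (U' - V') - (U * centProj a V - centProj a V * U) := by
    rw [hflat, perpProj_eq_sub]
    noncomm_ring
  rw [hsplit, centProj_sub, centProj_commutator_centProj a hU, centProj_sub, hU']
  abel

theorem eq_poisson_of_flat (hU : centProj a U = 0) (hU' : centProj a U' = 0)
    (hflat : U' = V' + (U * V - V * U)) :
    U' = perpProj a V' + perpProj a (U * perpProj a V - perpProj a V * U)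
      - (U * -centProj a V - -centProj a V * U) := by
  rw [perpProj_eq_sub a (U * perpProj a V - perpProj a V * U),
    centProj_commutator_perpProj_of_flat a hU hU' hflat, perpProj_eq_sub a V',
    perpProj_eq_sub a V, hflat]
  noncomm_ring

end Flatness

theorem stmt18_general (n : ℕ)
    (a : Matrix (Fin n) (Fin n) ℂ) (haDiag : a.IsDiag)
    (g : ℝ → ℝ → Matrix (Fin n) (Fin n) ℂ)
    (hg : ContDiff ℝ (⊤ : ℕ∞) fun p : ℝ × ℝ => g p.1 p.2)
    (hgU : ∀ x s, g x s ∈ Matrix.unitaryGroup (Fin n) ℂ)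
    -- u := g⁻¹ g_x takes values in u(n)_a^⊥
    (u : ℝ → ℝ → Matrix (Fin n) (Fin n) ℂ)
    (hu : ∀ x s, u x s = star (g x s) * deriv (fun y => g y s) x)
    (huP : ∀ x s, u x s ∈ uPerp a)
    -- Schwartz-class assumptions in x, for each s
    (hgsS : ∀ s, IsSchwartz (fun x => star (g x s) * deriv (fun σ => g x σ) s))
    -- asymptotic condition as x → −∞, for each s
    (hgslim : ∀ s, Tendsto (fun x => star (g x s) * deriv (fun σ => g x σ) s) atBot (nhds 0)) :
    ∀ s x, deriv (fun σ => u x σ) s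
        = Pu a (fun y => u y s)
            (fun y => perpProj a (star (g y s) * deriv (fun σ => g y σ) s)) x := by
  intro s x
  set V := fun y => star (g y s) * deriv (fun σ => g y σ) s
  have hflat : ∀ y, HasDerivAt (fun σ => u y σ) (deriv V y + (u y s * V y - V y * u y s)) s :=
    fun y => hasDerivAt_star_mul_partialFst (hg.of_le (by norm_cast)) hgU hu (fun _ _ => rfl) y s
  have hcent : ∀ y σ, centProj a (u y σ) = 0 :=
    fun y σ => centProj_eq_zero_of_mem_uPerp haDiag (huP y σ)
  have hcent' : ∀ y, centProj a (deriv V y + (u y s * V y - V y * u y s)) = 0 :=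
    fun y => centProj_eq_zero_of_hasDerivAt a (hflat y) (hcent y)
  have hT : Tu a (fun y => u y s) (fun y => perpProj a (V y)) x = -centProj a (V x) := by
    rw [← integral_Iic_centProj_deriv a (hgsS s) (hgslim s), ← integral_neg]
    exact congrArg _ (funext fun y =>
      centProj_commutator_perpProj_of_flat a (hcent y s) (hcent' y) rfl)
  -- `deriv` in `Pu` is elaborated with `Matrix.addCommGroup`, not the normed instance, so
  -- the derivative terms are matched up to defeq rather than rewritten.
  rw [Pu, hT]
  refine (hflat x).deriv.trans ?_
  convert eq_poisson_of_flat a (hcent x s) (hcent' x) rfl using 3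
  exact (((hgsS s).differentiable x).hasDerivAt.perpProj a).deriv

/-- Differential of the development map: for `a ∈ u(n)` a fixed diagonal
matrix and `g : ℝ² → U(n)`, `(x,s) ↦ g(x,s)`, smooth with `u := g⁻¹g_x` valued in
`u(n)_a^⊥`, such that for each `s` the maps `x ↦ u(x,s)` and `x ↦ (g⁻¹g_s)(x,s)` are of
Schwartz class and `(g⁻¹g_s)(x,s) → 0` as `x → −∞`, one has, for each `s`,
`∂_s u(·,s) = P_{u(·,s)}(π_a^⊥(g⁻¹g_s)(·,s))`. -/
theorem stmt18 (n : ℕ)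
    (a : Matrix (Fin n) (Fin n) ℂ) (haDiag : a.IsDiag) (haSkew : aᴴ = -a)
    (g : ℝ → ℝ → Matrix (Fin n) (Fin n) ℂ)
    (hg : ContDiff ℝ (⊤ : ℕ∞) fun p : ℝ × ℝ => g p.1 p.2)
    (hgU : ∀ x s, g x s ∈ Matrix.unitaryGroup (Fin n) ℂ)
    -- u := g⁻¹ g_x takes values in u(n)_a^⊥
    (u : ℝ → ℝ → Matrix (Fin n) (Fin n) ℂ)
    (hu : ∀ x s, u x s = star (g x s) * deriv (fun y => g y s) x)
    (huP : ∀ x s, u x s ∈ uPerp a)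
    -- Schwartz-class assumptions in x, for each s
    (huS : ∀ s, IsSchwartz (fun x => u x s))
    (hgsS : ∀ s, IsSchwartz (fun x => star (g x s) * deriv (fun σ => g x σ) s))
    -- asymptotic condition as x → −∞, for each s
    (hgslim : ∀ s, Tendsto (fun x => star (g x s) * deriv (fun σ => g x σ) s) atBot (nhds 0)) :
    ∀ s x, deriv (fun σ => u x σ) s
        = Pu a (fun y => u y s)
            (fun y => perpProj a (star (g y s) * deriv (fun σ => g y σ) s)) x :=
  stmt18_general n a haDiag g hg hgU u hu huP hgsS hgslim
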